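/- Let G be a finite simple graph and let s, t be positive integers such that t divides s. If α_s^{DP}(G) ≥ s·|V(G)|/χ_DP(G), then α_t^{DP}(G) ≥ t·|V(G)|/χ_DP(G). -/

import Mathlib

open SimpleGraph

/-- `DPCover G H L` means `(L, H)` is a cover of the graph `G`:
(1) the sets `L u` partition `V(H)`; (2) each `H[L u]` is complete;
(3) for each edge `uv` of `G`, the edges of `H` between `L u` and `L v` form a matching;
(4) there are no edges of `H` between lists of distinct non-adjacent vertices. -/
structure DPCover {V : Type} (G : SimpleGraph V) {W : Type} (H : SimpleGraph W)
    (L : V → Finset W) : Prop where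
  partition : ∀ w : W, ∃! v : V, w ∈ L v
  cliques : ∀ v : V, ∀ a ∈ L v, ∀ b ∈ L v, a ≠ b → H.Adj a b
  matching : ∀ ⦃u v : V⦄, G.Adj u v → ∀ a ∈ L u, ∀ b ∈ L v, ∀ b' ∈ L v,
      H.Adj a b → H.Adj a b' → b = b'
  nonadj : ∀ ⦃u v : V⦄, u ≠ v → ¬ G.Adj u v → ∀ a ∈ L u, ∀ b ∈ L v, ¬ H.Adj a b

/-- A finset is independent in `H` if no two of its elements are adjacent. -/
def IsIndepFinset {W : Type} (H : SimpleGraph W) (S : Finset W) : Prop :=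
  ∀ a ∈ S, ∀ b ∈ S, ¬ H.Adj a b

/-- The independence number of `H`. -/
noncomputable def indepNum {W : Type} [Fintype W] (H : SimpleGraph W) : ℕ :=
  sSup {n : ℕ | ∃ S : Finset W, IsIndepFinset H S ∧ S.card = n}

/-- The DP-chromatic number of `G`: the least `m` such that every `m`-fold cover `(L, H)`
of `G` admits an `H`-coloring, i.e. an independent set in `H` of size `|V(G)|`. -/
noncomputable def chiDP {V : Type} [Fintype V] (G : SimpleGraph V) : ℕ :=
  sInf {m : ℕ | ∀ (W : Type) (_ : Fintype W) (H : SimpleGraph W) (L : V → Finset W),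
    DPCover G H L → (∀ v, (L v).card = m) →
    ∃ S : Finset W, IsIndepFinset H S ∧ S.card = Fintype.card V}

/-- The partial DP `t`-chromatic number of `G`: the minimum of the independence number
`α(H)` over all `t`-fold covers `(L, H)` of `G`. -/
noncomputable def alphaDP {V : Type} [Fintype V] (G : SimpleGraph V) (t : ℕ) : ℕ :=
  sInf {n : ℕ | ∃ (W : Type) (_ : Fintype W) (H : SimpleGraph W) (L : V → Finset W),
    DPCover G H L ∧ (∀ v, (L v).card = t) ∧ _root_.indepNum H = n}

/-- A graph `G` is partially DP-nice if `α_t^{DP}(G) ≥ t|V(G)|/χ_DP(G)` for all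
`t ∈ {1, …, χ_DP(G)}`. -/
def PartiallyDPNice {V : Type} [Fintype V] (G : SimpleGraph V) : Prop :=
  ∀ t : ℕ, 1 ≤ t → t ≤ chiDP G →
    (t * Fintype.card V : ℚ) / (chiDP G : ℚ) ≤ (alphaDP G t : ℚ)

/-!
Blowing a `t`-fold cover `(L, H)` up into `k` copies of `H`, with each list `L v × Fin k` turned
into a clique, gives a `tk`-fold cover whose independent sets meet every copy of `H` in an
independent set of `H`. Hence `α_{tk}^{DP}(G) ≤ k · α_t^{DP}(G)`, and the hypothesis at `s = tk`
divides by `k` into the conclusion.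
-/

variable {V W : Type} {G : SimpleGraph V} {H : SimpleGraph W} {L : V → Finset W}

theorem IsIndepFinset.card_le_indepNum [Fintype W] {S : Finset W} (hS : IsIndepFinset H S) :
    S.card ≤ _root_.indepNum H :=
  le_csSup ⟨Fintype.card W, by rintro n ⟨T, -, rfl⟩; exact T.card_le_univ⟩ ⟨S, hS, rfl⟩

theorem indepNum_le [Fintype W] {n : ℕ} (h : ∀ S : Finset W, IsIndepFinset H S → S.card ≤ n) :
    _root_.indepNum H ≤ n :=
  csSup_le ⟨0, ∅, by simp [IsIndepFinset]⟩ (by rintro m ⟨S, hS, rfl⟩; exact h S hS)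

namespace DPCover

theorem eq_of_mem (hc : DPCover G H L) {w : W} {u v : V} (hu : w ∈ L u) (hv : w ∈ L v) :
    u = v :=
  (hc.partition w).unique hu hv

theorem singleton (G : SimpleGraph V) : DPCover G G fun v => {v} where
  partition w := ⟨w, Finset.mem_singleton_self w, fun _ hv => (Finset.mem_singleton.1 hv).symm⟩
  cliques v a ha b hb hab := by
    simp only [Finset.mem_singleton] at ha hb
    exact absurd (ha.trans hb.symm) hab
  matching _ _ _ _ _ b hb b' hb' _ _ :=
    (Finset.mem_singleton.1 hb).trans (Finset.mem_singleton.1 hb').symm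
  nonadj u v _ huv a ha b hb := by
    simp only [Finset.mem_singleton] at ha hb
    subst ha hb
    exact huv

end DPCover

def blowupGraph (H : SimpleGraph W) (L : V → Finset W) (k : ℕ) : SimpleGraph (W × Fin k) where
  Adj a b := a ≠ b ∧ ((∃ v, a.1 ∈ L v ∧ b.1 ∈ L v) ∨ (H.Adj a.1 b.1 ∧ a.2 = b.2))
  symm := ⟨fun _ _ ⟨hne, hab⟩ =>
    ⟨hne.symm, hab.imp (fun ⟨v, ha, hb⟩ => ⟨v, hb, ha⟩) (fun ⟨h, e⟩ => ⟨h.symm, e.symm⟩)⟩⟩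
  loopless := ⟨fun _ h => h.1 rfl⟩

theorem blowupGraph_adj {k : ℕ} {a b : W × Fin k} : (blowupGraph H L k).Adj a b ↔
    a ≠ b ∧ ((∃ v, a.1 ∈ L v ∧ b.1 ∈ L v) ∨ (H.Adj a.1 b.1 ∧ a.2 = b.2)) :=
  Iff.rfl

def blowupList (L : V → Finset W) (k : ℕ) (v : V) : Finset (W × Fin k) :=
  L v ×ˢ Finset.univ

@[simp]
theorem mem_blowupList {k : ℕ} {v : V} {w : W × Fin k} : w ∈ blowupList L k v ↔ w.1 ∈ L v := by
  simp [blowupList]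

theorem card_blowupList (k : ℕ) (v : V) : (blowupList L k v).card = (L v).card * k := by
  simp [blowupList, Finset.card_product]

namespace DPCover

variable {k : ℕ}

theorem adj_of_blowupGraph_adj (hc : DPCover G H L) {u v : V} (huv : u ≠ v)
    {a b : W × Fin k} (ha : a.1 ∈ L u) (hb : b.1 ∈ L v) (hab : (blowupGraph H L k).Adj a b) :
    H.Adj a.1 b.1 ∧ a.2 = b.2 := by
  refine (blowupGraph_adj.1 hab).2.resolve_left ?_
  rintro ⟨x, hax, hbx⟩
  exact huv ((hc.eq_of_mem ha hax).trans (hc.eq_of_mem hbx hb))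

theorem blowup (hc : DPCover G H L) (k : ℕ) : DPCover G (blowupGraph H L k) (blowupList L k) where
  partition w := by
    obtain ⟨v, hv, huniq⟩ := hc.partition w.1
    exact ⟨v, mem_blowupList.2 hv, fun u hu => huniq u (mem_blowupList.1 hu)⟩
  cliques v a ha b hb hab :=
    blowupGraph_adj.2 ⟨hab, .inl ⟨v, mem_blowupList.1 ha, mem_blowupList.1 hb⟩⟩
  matching u v huv a ha b hb b' hb' hab hab' := by
    rw [mem_blowupList] at ha hb hb'
    obtain ⟨hH, hi⟩ := hc.adj_of_blowupGraph_adj huv.ne ha hb hab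
    obtain ⟨hH', hi'⟩ := hc.adj_of_blowupGraph_adj huv.ne ha hb' hab'
    exact Prod.ext (hc.matching huv a.1 ha b.1 hb b'.1 hb' hH hH') (hi.symm.trans hi')
  nonadj u v huv hnadj a ha b hb hab := by
    rw [mem_blowupList] at ha hb
    exact hc.nonadj huv hnadj a.1 ha b.1 hb (hc.adj_of_blowupGraph_adj huv ha hb hab).1

end DPCover

theorem IsIndepFinset.image_fst_filter_snd_eq [DecidableEq W] {k : ℕ} {S : Finset (W × Fin k)}
    (hS : IsIndepFinset (blowupGraph H L k) S) (i : Fin k) :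
    IsIndepFinset H ((S.filter (·.2 = i)).image Prod.fst) := by
  simp only [IsIndepFinset, Finset.mem_image, Finset.mem_filter]
  rintro _ ⟨a, ⟨haS, rfl⟩, rfl⟩ _ ⟨b, ⟨hbS, hb⟩, rfl⟩ hab
  exact hS a haS b hbS <|
    blowupGraph_adj.2 ⟨fun e => hab.ne (congrArg Prod.fst e), .inr ⟨hab, hb.symm⟩⟩

theorem indepNum_blowupGraph_le [Fintype W] (k : ℕ) :
    _root_.indepNum (blowupGraph H L k) ≤ k * _root_.indepNum H := by
  classical
  refine indepNum_le fun S hS => ?_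
  calc S.card = ∑ i : Fin k, (S.filter (·.2 = i)).card :=
        Finset.card_eq_sum_card_fiberwise fun x _ => Finset.mem_univ x.2
    _ = ∑ i : Fin k, ((S.filter (·.2 = i)).image Prod.fst).card := by
        refine Finset.sum_congr rfl fun i _ => (Finset.card_image_of_injOn ?_).symm
        intro a ha b hb hab
        simp only [Finset.coe_filter, Set.mem_ofPred_eq] at ha hb
        exact Prod.ext hab (ha.2.trans hb.2.symm)
    _ ≤ ∑ _i : Fin k, _root_.indepNum H :=
        Finset.sum_le_sum fun i _ => (hS.image_fst_filter_snd_eq i).card_le_indepNum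
    _ = k * _root_.indepNum H := by simp

theorem alphaDP_le_indepNum [Fintype V] [Fintype W] {t : ℕ} (hc : DPCover G H L)
    (hL : ∀ v, (L v).card = t) : alphaDP G t ≤ _root_.indepNum H :=
  Nat.sInf_le ⟨W, inferInstance, H, L, hc, hL, rfl⟩

theorem exists_dpCover_indepNum_eq_alphaDP [Fintype V] (G : SimpleGraph V) (t : ℕ) :
    ∃ (W : Type) (_ : Fintype W) (H : SimpleGraph W) (L : V → Finset W),
      DPCover G H L ∧ (∀ v, (L v).card = t) ∧ _root_.indepNum H = alphaDP G t :=
  Nat.sInf_mem (s := {n | ∃ (W : Type) (_ : Fintype W) (H : SimpleGraph W) (L : V → Finset W),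
      DPCover G H L ∧ (∀ v, (L v).card = t) ∧ _root_.indepNum H = n})
    ⟨_, V × Fin t, inferInstance, _, _, (DPCover.singleton G).blowup t,
      fun v => by rw [card_blowupList, Finset.card_singleton, one_mul], rfl⟩

theorem alphaDP_mul_le [Fintype V] (G : SimpleGraph V) (t k : ℕ) :
    alphaDP G (t * k) ≤ k * alphaDP G t := by
  obtain ⟨W, _, H, L, hc, hL, hα⟩ := exists_dpCover_indepNum_eq_alphaDP G t
  calc alphaDP G (t * k) ≤ _root_.indepNum (blowupGraph H L k) :=
        alphaDP_le_indepNum (hc.blowup k) fun v => by rw [card_blowupList, hL]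
    _ ≤ k * _root_.indepNum H := indepNum_blowupGraph_le k
    _ = k * alphaDP G t := by rw [hα]

theorem alphaDP_of_dvd_general {V : Type} [Fintype V] (G : SimpleGraph V)
    (s t : ℕ) (hs : 0 < s) (hdvd : t ∣ s)
    (h : (s * Fintype.card V : ℚ) / (chiDP G : ℚ) ≤ (alphaDP G s : ℚ)) :
    (t * Fintype.card V : ℚ) / (chiDP G : ℚ) ≤ (alphaDP G t : ℚ) := by
  obtain ⟨k, rfl⟩ := hdvd
  have hk : (0 : ℚ) < k := by
    exact_mod_cast Nat.pos_of_ne_zero (by rintro rfl; simp at hs)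
  have hmul : (alphaDP G (t * k) : ℚ) ≤ k * alphaDP G t := by
    exact_mod_cast alphaDP_mul_le G t k
  refine le_of_mul_le_mul_right ?_ hk
  calc (t * Fintype.card V : ℚ) / chiDP G * k
        = ((t * k : ℕ) * Fintype.card V : ℚ) / chiDP G := by push_cast; ring
    _ ≤ alphaDP G (t * k) := h
    _ ≤ k * alphaDP G t := hmul
    _ = alphaDP G t * k := mul_comm _ _

/-- If `t` divides `s` and `α_s^{DP}(G) ≥ s|V(G)|/χ_DP(G)`, then
`α_t^{DP}(G) ≥ t|V(G)|/χ_DP(G)`. -/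
theorem alphaDP_of_dvd {V : Type} [Fintype V] (G : SimpleGraph V)
    (s t : ℕ) (hs : 0 < s) (ht : 0 < t) (hdvd : t ∣ s)
    (h : (s * Fintype.card V : ℚ) / (chiDP G : ℚ) ≤ (alphaDP G s : ℚ)) :
    (t * Fintype.card V : ℚ) / (chiDP G : ℚ) ≤ (alphaDP G t : ℚ) :=
  alphaDP_of_dvd_general G s t hs hdvd h
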